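/- The forgetful functor U : Dynam ⥤ FintypeCat, sending a dynamical system (S, v) to its finite type S of variables and a morphism to its underlying function, is not a right adjoint; that is, U has no left adjoint. -/

import Mathlib

open CategoryTheory

open scoped Classical

/-- The pushforward of a function `ψ : S → ℝ` along `f : S → S'`. -/
noncomputable def pushforward {S S' : Type} [Fintype S] (f : S → S') (ψ : S → ℝ) : S' → ℝ :=
  fun s' => ∑ s : S, if f s = s' then ψ s else 0

/-- The pullback of a function `ψ : S' → ℝ` along `f : S → S'`. -/
def pullback {S S' : Type} (f : S → S') (ψ : S' → ℝ) : S → ℝ := ψ ∘ f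

theorem pushforward_id {S : Type} [Fintype S] :
    pushforward (id : S → S) = fun ψ => ψ := by
  funext ψ s
  simp [pushforward]

theorem pushforward_comp {S T U : Type} [Fintype S] [Fintype T]
    (f : S → T) (g : T → U) (ψ : S → ℝ) :
    pushforward g (pushforward f ψ) = pushforward (g ∘ f) ψ := by
  funext u
  simp only [pushforward, Function.comp_apply]
  have h1 : ∀ t : T, (if g t = u then ∑ s : S, (if f s = t then ψ s else 0) else 0)
      = ∑ s : S, (if f s = t ∧ g t = u then ψ s else 0) := by
    intro t
    by_cases h : g t = u
    · simp only [h, if_true, and_true]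
    · simp [h]
  rw [Finset.sum_congr rfl fun t _ => h1 t, Finset.sum_comm]
  refine Finset.sum_congr rfl fun s _ => ?_
  rw [Finset.sum_eq_single (f s)]
  · simp
  · intro t _ ht
    simp [Ne.symm ht]
  · simp

/-- A dynamical system: a finite set `S` of variables together with a smooth vector
field on `ℝ^S`. -/
structure DynSys where
  S : Type
  [finS : Fintype S]
  v : (S → ℝ) → (S → ℝ)
  smooth : ContDiff ℝ (⊤ : ℕ∞) v

attribute [instance] DynSys.finS

/-- A morphism of dynamical systems: a function `f` on the variables with
`f_* ∘ v ∘ f^* = v'`. -/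
@[ext]
structure DynHom (A B : DynSys) where
  f : A.S → B.S
  compat : pushforward f ∘ A.v ∘ pullback f = B.v

/-- The category `Dynam` of dynamical systems. -/
instance : Category DynSys where
  Hom := DynHom
  id A := ⟨id, by rw [pushforward_id]; rfl⟩
  comp {A B C} φ φ' := ⟨φ'.f ∘ φ.f, by
    rw [← φ'.compat, ← φ.compat]
    funext x
    show pushforward (φ'.f ∘ φ.f) (A.v (pullback (φ'.f ∘ φ.f) x)) = _
    rw [← pushforward_comp]
    rfl⟩
  id_comp φ := DynHom.ext rfl
  comp_id φ := DynHom.ext rfl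
  assoc φ φ' φ'' := DynHom.ext rfl


/-- The forgetful functor from dynamical systems to finite sets, sending a dynamical
system to its finite set of variables. -/
def forgetDyn : DynSys ⥤ FintypeCat where
  obj A := FintypeCat.of A.S
  map φ := FintypeCat.homMk φ.f
  map_id _ := rfl
  map_comp _ _ := rfl

/-- The forgetful functor from dynamical systems to finite sets is not a right
adjoint: it has no left adjoint. -/
theorem forgetDyn_not_rightAdjoint : ¬ forgetDyn.IsRightAdjoint := by
  intro h
  obtain ⟨F, ⟨adj⟩⟩ := h
  let X := FintypeCat.of PUnit
  let A0 : DynSys := { S := PUnit, v := fun _ _ => 0, smooth := contDiff_const }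
  let A1 : DynSys := { S := PUnit, v := fun _ _ => 1, smooth := contDiff_const }
  let g0 : F.obj X ⟶ A0 := (adj.homEquiv X A0).symm (FintypeCat.homMk (fun _ => PUnit.unit))
  let g1 : F.obj X ⟶ A1 := (adj.homEquiv X A1).symm (FintypeCat.homMk (fun _ => PUnit.unit))
  have hf : g0.f = g1.f := by funext s; rfl
  have h0 := g0.compat
  have h1 := g1.compat
  rw [hf] at h0
  rw [h0] at h1
  have := congrFun (congrFun h1 (fun _ => 0)) PUnit.unit
  norm_num at this
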